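/- Let p be a monic polynomial of degree n over the tropical hyperfield T with p ∈ ∏_{i=1}^n (T + a_i). If q is a polynomial over T with p ∈ (T + a_n)·q, then q ∈ ∏_{i=1}^{n-1} (T + a_i). -/

import Mathlib

/-- Hyperaddition of the tropical hyperfield `T = ℝ ∪ {∞}`:
`a ⊞ b = {min a b}` if `a ≠ b`, and `a ⊞ a = {c : a ≤ c}`.  Tropical multiplication is
addition of extended reals. -/
noncomputable def thadd (a b : WithTop ℝ) : Set (WithTop ℝ) :=
  if a = b then {c | a ≤ c} else {min a b}

/-- The hypersum of a list of elements of the tropical hyperfield, defined recursively. -/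
noncomputable def thsum : List (WithTop ℝ) → Set (WithTop ℝ)
  | [] => {⊤}
  | [x] => {x}
  | x :: y :: l => ⋃ b ∈ thsum (y :: l), thadd b x

/-- `TFactors n c a` expresses `p ∈ ∏_{e=0}^{n-1} (T + a_e)` for the monic polynomial
`p = Σ_{i=0}^n c_i T^i` over the tropical hyperfield: for each `i = 1, …, n`,
`c_{n-i}` lies in the hypersum, over all `i`-element subsets `S` of `{0, …, n-1}`, of the
tropical products `∑_{e ∈ S} a_e`. -/
noncomputable def TFactors (n : ℕ) (c : ℕ → WithTop ℝ) (a : ℕ → WithTop ℝ) : Prop :=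
  ∀ i, 1 ≤ i → i ≤ n →
    c (n - i) ∈ thsum ((((Finset.range n).powersetCard i).toList).map
      (fun S => ∑ e ∈ S, a e))

/-- `TDivRel a n c d` expresses `p ∈ (T + a) q` over the tropical hyperfield, where
`p = Σ_{i=0}^n c_i T^i` and `q = Σ_{i=0}^{n-1} d_i T^i` (in `T` every element is its own
hyperadditive inverse, so `T - a` and `T + a` coincide): `c_0 = a·d_0`,
`c_i ∈ a·d_i ⊞ d_{i-1}` for `1 ≤ i ≤ n - 1`, and `c_n = d_{n-1}`
(tropical multiplication being addition of extended reals). -/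
noncomputable def TDivRel (a : WithTop ℝ) (n : ℕ) (c d : ℕ → WithTop ℝ) : Prop :=
  c 0 = a + d 0 ∧
  (∀ i, 1 ≤ i → i ≤ n - 1 → c i ∈ thadd (a + d i) (d (i - 1))) ∧
  c n = d (n - 1)

/-!
Write `σ j` for the tropical elementary symmetric function `min_{|S| = j} ∑_{i ∈ S} a i`
of `a 0, …, a (m - 1)`. A value lies in the hypersum `⊞_{|S| = j} ∑_{i ∈ S} a i` iff it is
at least `σ j`, with equality unless the minimum is attained twice. An exchange argument
shows that `σ` is convex, strictly at every `j` where the minimum is attained once; hence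
the `k` with `σ (k + 1) ≤ a m + σ k` form an initial segment. On that segment the division
relation pushes the lower bound `σ j ≤ d (m - j)` up from `d m = 0`; beyond it, it pushes
the bound down from `d 0 = σ m`. Where the minimum defining `σ j` is unique, strict
convexity makes one of the two relations of `p ∈ (T + a m) q` involving `d (m - j)` rigid,
which pins `d (m - j)` to `σ j`.
-/

open Finset

lemma List.foldr_min_le {α : Type*} [LinearOrder α] [OrderTop α] {L : List α} {w : α}
    (hw : w ∈ L) :
    L.foldr min ⊤ ≤ w := by
  induction L with
  | nil => simp at hw
  | cons y L ih =>
    rcases List.mem_cons.1 hw with rfl | hw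
    · exact min_le_left _ _
    · exact (min_le_right _ _).trans (ih hw)

lemma List.foldr_min_mem {α : Type*} [LinearOrder α] [OrderTop α] :
    ∀ {L : List α}, L ≠ [] → L.foldr min ⊤ ∈ L
  | [y], _ => by simp
  | y :: z :: l, _ => by
    rw [List.foldr_cons]
    rcases min_choice y ((z :: l).foldr min ⊤) with h | h <;> rw [h]
    · exact List.mem_cons_self
    · exact List.mem_cons_of_mem _ (List.foldr_min_mem (List.cons_ne_nil z l))

lemma List.foldr_min_map_toList {α β : Type*} [LinearOrder α] [OrderTop α] (F : Finset β)
    (g : β → α) :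
    (F.toList.map g).foldr min ⊤ = F.inf g := by
  rw [Finset.inf_def, ← Finset.coe_toList F, Multiset.map_coe, Multiset.inf_coe]

lemma List.count_map_toList {α β : Type*} [DecidableEq α] (F : Finset β) (g : β → α)
    (v : α) :
    (F.toList.map g).count v = #{S ∈ F | g S = v} := by
  rw [← Multiset.coe_count, ← Multiset.map_coe, Finset.coe_toList, Multiset.count_map,
    Finset.card_def, Finset.filter_val]
  simp only [eq_comm]

lemma mem_thadd_iff {x y z : WithTop ℝ} :
    z ∈ thadd x y ↔ min x y ≤ z ∧ (z = min x y ∨ x = y) := by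
  unfold thadd
  split_ifs with h
  · simp [h]
  · simp only [Set.mem_singleton_iff, h, or_false, iff_and_self]
    exact fun hz => hz.ge

lemma thadd_comm (x y : WithTop ℝ) : thadd x y = thadd y x := by
  unfold thadd
  by_cases h : x = y
  · simp [h]
  · simp [h, Ne.symm h, min_comm]

section thadd

variable {x y z s : WithTop ℝ}

lemma le_right_of_mem_thadd (h : z ∈ thadd x y) (hz : s ≤ z) (hx : s ≤ x) : s ≤ y := by
  obtain ⟨-, rfl | rfl⟩ := mem_thadd_iff.1 h
  · exact hz.trans (min_le_right x y)
  · exact hx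

lemma le_left_of_mem_thadd (h : z ∈ thadd x y) (hz : s ≤ z) (hy : s ≤ y) : s ≤ x :=
  le_right_of_mem_thadd (thadd_comm x y ▸ h) hz hy

lemma eq_right_of_mem_thadd (h : z ∈ thadd x y) (hz : z < x) : y = z := by
  obtain ⟨hmin, rfl | rfl⟩ := mem_thadd_iff.1 h
  · exact (min_eq_right (min_lt_iff.1 hz |>.resolve_left (lt_irrefl x)).le).symm
  · exact absurd (min_self x ▸ hmin) hz.not_ge

lemma eq_left_of_mem_thadd (h : z ∈ thadd x y) (hz : z < y) : x = z :=
  eq_right_of_mem_thadd (thadd_comm x y ▸ h) hz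

end thadd

lemma exists_mem_thadd_iff {L : List (WithTop ℝ)} (hL : L ≠ []) (x y : WithTop ℝ) :
    (∃ b, (L.foldr min ⊤ ≤ b ∧ (b = L.foldr min ⊤ ∨ 1 < L.count (L.foldr min ⊤))) ∧
        x ∈ thadd b y) ↔
      min y (L.foldr min ⊤) ≤ x ∧
        (x = min y (L.foldr min ⊤) ∨ 1 < (y :: L).count (min y (L.foldr min ⊤))) := by
  simp only [List.count_cons, mem_thadd_iff, beq_iff_eq]
  have hmem := List.count_pos_iff.2 (List.foldr_min_mem hL)
  have hle : ∀ w ∈ L, L.foldr min ⊤ ≤ w := fun w => List.foldr_min_le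
  generalize L.foldr min ⊤ = μ at hmem hle ⊢
  rcases lt_trichotomy y μ with h | rfl | h
  · have h0 : L.count y = 0 := List.count_eq_zero.2 fun hy => (hle y hy).not_gt h
    simp only [min_eq_left h.le, h0, if_true, zero_add, lt_irrefl, or_false]
    constructor
    · rintro ⟨b, ⟨hb, -⟩, -, hx⟩
      have hyb : y < b := h.trans_le hb
      rw [min_eq_right hyb.le, or_iff_left hyb.ne'] at hx
      exact ⟨hx.ge, hx⟩
    · rintro ⟨-, rfl⟩
      exact ⟨μ, ⟨le_rfl, Or.inl rfl⟩, by simp [min_eq_right h.le]⟩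
  · simp only [min_self, if_true, lt_add_iff_pos_left, hmem, or_true, and_true]
    constructor
    · rintro ⟨b, ⟨hb, -⟩, hx, -⟩
      exact (le_min hb le_rfl).trans hx
    · intro hx
      exact ⟨y, ⟨le_rfl, Or.inl rfl⟩, by simpa using hx, Or.inr rfl⟩
  · simp only [min_eq_right h.le, h.ne', if_false, add_zero]
    constructor
    · rintro ⟨b, ⟨hb, rfl | hk⟩, hx, hxb⟩
      · rw [min_eq_left h.le, or_iff_left h.ne] at hxb
        exact ⟨hxb.ge, Or.inl hxb⟩
      · exact ⟨(le_min hb h.le).trans hx, Or.inr hk⟩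
    · rintro ⟨hx, rfl | hk⟩
      · exact ⟨x, ⟨le_rfl, Or.inl rfl⟩, by simp [min_eq_left h.le]⟩
      rcases lt_or_ge x y with hxy | hyx
      · exact ⟨x, ⟨hx, Or.inr hk⟩, by simp [min_eq_left hxy.le]⟩
      · exact ⟨y, ⟨h.le, Or.inr hk⟩, by simpa using hyx, Or.inr rfl⟩

theorem mem_thsum_iff : ∀ (L : List (WithTop ℝ)) (x : WithTop ℝ),
    x ∈ thsum L ↔
      L.foldr min ⊤ ≤ x ∧ (x = L.foldr min ⊤ ∨ 1 < L.count (L.foldr min ⊤))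
  | [], x => by simp [thsum]
  | [y], x => by simpa [thsum] using fun h : x = y => h.ge
  | y :: z :: l, x => by
    have hcons : x ∈ thsum (y :: z :: l) ↔ ∃ b ∈ thsum (z :: l), x ∈ thadd b y := by
      simp [thsum]
    simp only [hcons, mem_thsum_iff (z :: l)]
    exact exists_mem_thadd_iff (List.cons_ne_nil z l) x y

lemma mem_powersetCard_range_succ {m j : ℕ} {S : Finset ℕ}
    (hS : S ∈ (range (m + 1)).powersetCard (j + 1)) :
    (m ∉ S ∧ S ∈ (range m).powersetCard (j + 1)) ∨
      (m ∈ S ∧ S.erase m ∈ (range m).powersetCard j) := by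
  rw [range_add_one, mem_powersetCard] at hS
  by_cases hm : m ∈ S
  · refine Or.inr ⟨hm, mem_powersetCard.2 ⟨subset_insert_iff.1 hS.1, ?_⟩⟩
    rw [card_erase_of_mem hm, hS.2]
    rfl
  · exact Or.inl ⟨hm, mem_powersetCard.2 ⟨(subset_insert_iff_of_notMem hm).1 hS.1, hS.2⟩⟩

lemma exists_exchange {M : Type*} [AddCommMonoid M] (a : ℕ → M) {m k : ℕ} {W U : Finset ℕ}
    (hW : W ∈ (range m).powersetCard (k + 2)) (hU : U ∈ (range m).powersetCard k) :
    ∃ S ∈ (range m).powersetCard (k + 1), ∃ T ∈ (range m).powersetCard (k + 1),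
      S ≠ T ∧ ∑ i ∈ S, a i + ∑ i ∈ T, a i = ∑ i ∈ W, a i + ∑ i ∈ U, a i := by
  rw [mem_powersetCard] at hW hU
  obtain ⟨e, heW, heU⟩ := exists_mem_notMem_of_card_lt_card (by omega : #U < #W)
  refine ⟨W.erase e, mem_powersetCard.2 ⟨(erase_subset e W).trans hW.1, ?_⟩,
    insert e U, mem_powersetCard.2 ⟨insert_subset (hW.1 heW) hU.1, ?_⟩,
    fun h => notMem_erase e W (h ▸ mem_insert_self e U), ?_⟩
  · rw [card_erase_of_mem heW, hW.2]; rfl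
  · rw [card_insert_of_notMem heU, hU.2]
  · rw [sum_insert heU, ← add_sum_erase W a heW]
    ac_rfl

noncomputable def tropEsymm (a : ℕ → WithTop ℝ) (m j : ℕ) : WithTop ℝ :=
  ((range m).powersetCard j).inf fun S => ∑ i ∈ S, a i

noncomputable def tropEsymmArgmin (a : ℕ → WithTop ℝ) (m j : ℕ) : Finset (Finset ℕ) :=
  {S ∈ (range m).powersetCard j | ∑ i ∈ S, a i = tropEsymm a m j}

def tropEsymmSet (a : ℕ → WithTop ℝ) (m j : ℕ) : Set (WithTop ℝ) :=
  {x | tropEsymm a m j ≤ x ∧ (x = tropEsymm a m j ∨ 1 < #(tropEsymmArgmin a m j))}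

theorem thsum_map_powersetCard (a : ℕ → WithTop ℝ) (m j : ℕ) :
    thsum (((range m).powersetCard j).toList.map fun S => ∑ i ∈ S, a i) =
      tropEsymmSet a m j := by
  ext x
  rw [mem_thsum_iff, List.foldr_min_map_toList, List.count_map_toList]
  rfl

section tropEsymm

variable {a : ℕ → WithTop ℝ} {m j k : ℕ} {A : WithTop ℝ}

lemma eq_of_mem_tropEsymmSet {x : WithTop ℝ} (hx : x ∈ tropEsymmSet a m j)
    (hu : #(tropEsymmArgmin a m j) ≤ 1) : x = tropEsymm a m j :=
  hx.2.resolve_right hu.not_gt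

variable (a) in
lemma tropEsymm_zero (m : ℕ) : tropEsymm a m 0 = 0 := by
  simp [tropEsymm]

variable (a) in
lemma tropEsymm_of_lt (h : m < j) : tropEsymm a m j = ⊤ := by
  rw [tropEsymm, powersetCard_eq_empty.2 (by simpa using h), inf_empty]

lemma tropEsymm_le_sum {S : Finset ℕ} (hS : S ∈ (range m).powersetCard j) :
    tropEsymm a m j ≤ ∑ i ∈ S, a i :=
  inf_le hS

lemma exists_sum_eq_tropEsymm (hj : j ≤ m) :
    ∃ S ∈ (range m).powersetCard j, ∑ i ∈ S, a i = tropEsymm a m j := by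
  have hne : ((range m).powersetCard j).Nonempty := powersetCard_nonempty.2 (by simpa using hj)
  obtain ⟨S, hS, h⟩ := exists_mem_eq_inf _ hne fun S => ∑ i ∈ S, a i
  exact ⟨S, hS, h.symm⟩

lemma tropEsymm_succ_succ (m j : ℕ) :
    tropEsymm a (m + 1) (j + 1) = min (tropEsymm a m (j + 1)) (a m + tropEsymm a m j) := by
  have hm : m ∉ range m := by simp
  rw [tropEsymm, range_add_one, powersetCard_succ_insert hm, inf_union, inf_image]
  congr 1
  rw [tropEsymm, apply_inf_eq_inf_comp_of_linearOrder (a m + ·)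
    (fun _ _ h => add_le_add_right h _) (add_top _)]
  refine inf_congr rfl fun T hT => ?_
  have hmT : m ∉ T := fun h => hm ((mem_powersetCard.1 hT).1 h)
  simp [sum_insert hmT]

lemma tropEsymm_ne_top_of_succ (h : tropEsymm a m (j + 1) ≠ ⊤) : tropEsymm a m j ≠ ⊤ := by
  obtain ⟨S, hS, hSe⟩ := exists_sum_eq_tropEsymm (a := a)
    (le_of_not_gt fun hm => h (tropEsymm_of_lt a hm))
  rw [mem_powersetCard] at hS
  obtain ⟨e, he⟩ := card_pos.1 (by omega : 0 < #S)
  have hSe' : S.erase e ∈ (range m).powersetCard j :=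
    mem_powersetCard.2 ⟨(erase_subset e S).trans hS.1, by rw [card_erase_of_mem he, hS.2]; rfl⟩
  rw [← hSe, ← add_sum_erase S a he] at h
  exact ne_top_of_le_ne_top (WithTop.add_ne_top.1 h).2 (tropEsymm_le_sum hSe')

variable (a) in
lemma tropEsymm_add_self_le (m k : ℕ) :
    tropEsymm a m (k + 1) + tropEsymm a m (k + 1) ≤ tropEsymm a m (k + 2) + tropEsymm a m k := by
  rcases lt_or_ge m (k + 2) with h | h
  · rw [tropEsymm_of_lt a h, top_add]
    exact le_top
  obtain ⟨W, hW, hWe⟩ := exists_sum_eq_tropEsymm (a := a) h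
  obtain ⟨U, hU, hUe⟩ := exists_sum_eq_tropEsymm (a := a) (by omega : k ≤ m)
  obtain ⟨S, hS, T, hT, -, hST⟩ := exists_exchange a hW hU
  rw [← hWe, ← hUe, ← hST]
  exact add_le_add (tropEsymm_le_sum hS) (tropEsymm_le_sum hT)

lemma tropEsymm_add_self_lt (hfin : tropEsymm a m (k + 1) ≠ ⊤)
    (hu : #(tropEsymmArgmin a m (k + 1)) ≤ 1) :
    tropEsymm a m (k + 1) + tropEsymm a m (k + 1) < tropEsymm a m (k + 2) + tropEsymm a m k := by
  rcases lt_or_ge m (k + 2) with h | h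
  · rw [tropEsymm_of_lt a h, top_add]
    exact WithTop.add_lt_top.2 ⟨hfin.lt_top, hfin.lt_top⟩
  obtain ⟨W, hW, hWe⟩ := exists_sum_eq_tropEsymm (a := a) h
  obtain ⟨U, hU, hUe⟩ := exists_sum_eq_tropEsymm (a := a) (by omega : k ≤ m)
  obtain ⟨S, hS, T, hT, hne, hST⟩ := exists_exchange a hW hU
  rw [← hWe, ← hUe, ← hST]
  by_contra! hle
  have hSle := tropEsymm_le_sum (a := a) hS
  have hTle := tropEsymm_le_sum (a := a) hT
  have hSeq : ∑ i ∈ S, a i = tropEsymm a m (k + 1) := le_antisymm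
    ((WithTop.add_le_add_iff_right hfin).1 ((add_le_add_right hTle _).trans hle)) hSle
  have hTeq : ∑ i ∈ T, a i = tropEsymm a m (k + 1) := le_antisymm
    ((WithTop.add_le_add_iff_left hfin).1 ((add_le_add_left hSle _).trans hle)) hTle
  have : 1 < #(tropEsymmArgmin a m (k + 1)) :=
    one_lt_card.2 ⟨S, mem_filter.2 ⟨hS, hSeq⟩, T, mem_filter.2 ⟨hT, hTeq⟩, hne⟩
  omega

lemma card_tropEsymmArgmin_succ_le_of_lt_add
    (h : tropEsymm a m (j + 1) < a m + tropEsymm a m j) :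
    #(tropEsymmArgmin a (m + 1) (j + 1)) ≤ #(tropEsymmArgmin a m (j + 1)) := by
  refine card_le_card fun S hS => ?_
  rw [tropEsymmArgmin, mem_filter, tropEsymm_succ_succ, min_eq_left h.le] at hS
  rw [tropEsymmArgmin, mem_filter]
  rcases mem_powersetCard_range_succ hS.1 with ⟨-, hS'⟩ | ⟨hm, hS'⟩
  · exact ⟨hS', hS.2⟩
  · have hle : a m + tropEsymm a m j ≤ tropEsymm a m (j + 1) := by
      rw [← hS.2, ← add_sum_erase S a hm]
      exact add_le_add_right (tropEsymm_le_sum hS') _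
    exact absurd hle h.not_ge

lemma card_tropEsymmArgmin_succ_le_of_add_lt
    (h : a m + tropEsymm a m j < tropEsymm a m (j + 1)) :
    #(tropEsymmArgmin a (m + 1) (j + 1)) ≤ #(tropEsymmArgmin a m j) := by
  have hA : a m ≠ ⊤ := fun hA => by simp [hA] at h
  refine (card_le_card fun S hS => ?_).trans (card_image_le (f := insert m))
  rw [tropEsymmArgmin, mem_filter, tropEsymm_succ_succ, min_eq_right h.le] at hS
  rcases mem_powersetCard_range_succ hS.1 with ⟨-, hS'⟩ | ⟨hm, hS'⟩
  · exact absurd (hS.2 ▸ tropEsymm_le_sum hS') h.not_ge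
  · refine mem_image.2 ⟨S.erase m, mem_filter.2 ⟨hS', ?_⟩, insert_erase hm⟩
    rw [← add_sum_erase S a hm] at hS
    exact WithTop.add_left_cancel hA hS.2

lemma add_tropEsymm_le_succ_of_le (hA : A ≠ ⊤)
    (h : A + tropEsymm a m k ≤ tropEsymm a m (k + 1)) {l : ℕ} (hkl : k ≤ l) :
    A + tropEsymm a m l ≤ tropEsymm a m (l + 1) := by
  induction l, hkl using Nat.le_induction with
  | base => exact h
  | succ l _ ih =>
    rcases eq_or_ne (tropEsymm a m (l + 2)) ⊤ with h2 | h2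
    · rw [h2]
      exact le_top
    have h1 := tropEsymm_ne_top_of_succ h2
    have h0 := tropEsymm_ne_top_of_succ h1
    have hconv := tropEsymm_add_self_le a m l
    lift A to ℝ using hA
    lift tropEsymm a m l to ℝ using h0 with s0
    lift tropEsymm a m (l + 1) to ℝ using h1 with s1
    lift tropEsymm a m (l + 2) to ℝ using h2 with s2
    norm_cast at *
    linarith

lemma tropEsymm_lt_add_or_add_lt (hfin : tropEsymm a m (k + 1) ≠ ⊤)
    (hu : #(tropEsymmArgmin a m (k + 1)) ≤ 1) :
    tropEsymm a m (k + 1) < A + tropEsymm a m k ∨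
      A + tropEsymm a m (k + 1) < tropEsymm a m (k + 2) := by
  by_contra! ⟨h1, h2⟩
  have hconv := tropEsymm_add_self_lt hfin hu
  have h0 := tropEsymm_ne_top_of_succ hfin
  have hA : A ≠ ⊤ := fun hA => hfin (top_le_iff.1 (by simpa [hA] using h1))
  have h2' : tropEsymm a m (k + 2) ≠ ⊤ :=
    ne_top_of_le_ne_top (WithTop.add_ne_top.2 ⟨hA, hfin⟩) h2
  lift A to ℝ using hA
  lift tropEsymm a m k to ℝ using h0 with s0
  lift tropEsymm a m (k + 1) to ℝ using hfin with s1
  lift tropEsymm a m (k + 2) to ℝ using h2' with s2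
  norm_cast at *
  linarith

end tropEsymm

section division

/- `e j` and `f j` are the coefficients of `q` and `p` of codegree `j`, i.e. `d (m - j)` and
`c (m + 1 - j)`, so that `e j` is compared with `tropEsymm a m j`. -/
variable {a e f : ℕ → WithTop ℝ} {m : ℕ}

lemma tropEsymm_le_of_forall_le_add (he0 : e 0 = 0)
    (hrel : ∀ j < m, f (j + 1) ∈ thadd (a m + e j) (e (j + 1)))
    (hf : ∀ j ≤ m, f (j + 1) ∈ tropEsymmSet a (m + 1) (j + 1)) :
    ∀ j ≤ m, (∀ k < j, tropEsymm a m (k + 1) ≤ a m + tropEsymm a m k) →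
      tropEsymm a m j ≤ e j
  | 0, _, _ => by rw [tropEsymm_zero, he0]
  | j + 1, hj, hP => by
    have ih := tropEsymm_le_of_forall_le_add he0 hrel hf j (by omega) fun k hk => hP k (by omega)
    refine le_right_of_mem_thadd (hrel j (by omega)) ?_
      ((hP j (by omega)).trans (add_le_add_right ih _))
    calc tropEsymm a m (j + 1) = tropEsymm a (m + 1) (j + 1) := by
          rw [tropEsymm_succ_succ, min_eq_left (hP j (by omega))]
      _ ≤ f (j + 1) := (hf j (by omega)).1

lemma tropEsymm_le_of_forall_add_le (hA : a m ≠ ⊤) (hem : tropEsymm a m m ≤ e m)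
    (hrel : ∀ j < m, f (j + 1) ∈ thadd (a m + e j) (e (j + 1)))
    (hf : ∀ j ≤ m, f (j + 1) ∈ tropEsymmSet a (m + 1) (j + 1)) {j : ℕ} (hj : j ≤ m)
    (hQ : ∀ k, j ≤ k → k < m → a m + tropEsymm a m k ≤ tropEsymm a m (k + 1)) :
    tropEsymm a m j ≤ e j := by
  induction hj using Nat.decreasingInduction with
  | self => exact hem
  | of_succ k hk ih =>
    have hQk := hQ k le_rfl hk
    have hf' : a m + tropEsymm a m k ≤ f (k + 1) := by
      calc a m + tropEsymm a m k = tropEsymm a (m + 1) (k + 1) := by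
            rw [tropEsymm_succ_succ, min_eq_right hQk]
        _ ≤ f (k + 1) := (hf k hk.le).1
    have ih := ih fun l hl hlm => hQ l (by omega) hlm
    exact (WithTop.add_le_add_iff_left hA).1
      (le_left_of_mem_thadd (hrel k hk) hf' (hQk.trans ih))

lemma eq_tropEsymm_self (hA : a m ≠ ⊤) (hlast : f (m + 1) = a m + e m)
    (hf : f (m + 1) ∈ tropEsymmSet a (m + 1) (m + 1)) : e m = tropEsymm a m m := by
  have hu : #(tropEsymmArgmin a (m + 1) (m + 1)) ≤ 1 :=
    (card_filter_le _ _).trans (by simp)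
  have := eq_of_mem_tropEsymmSet hf hu
  rw [tropEsymm_succ_succ, tropEsymm_of_lt a (Nat.lt_succ_self m), min_eq_right le_top,
    hlast] at this
  exact WithTop.add_left_cancel hA this

lemma tropEsymm_le_of_mem_thadd (he0 : e 0 = 0) (hlast : f (m + 1) = a m + e m)
    (hrel : ∀ j < m, f (j + 1) ∈ thadd (a m + e j) (e (j + 1)))
    (hf : ∀ j ≤ m, f (j + 1) ∈ tropEsymmSet a (m + 1) (j + 1)) {j : ℕ} (hj : j ≤ m) :
    tropEsymm a m j ≤ e j := by
  by_cases hA : a m = ⊤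
  · exact tropEsymm_le_of_forall_le_add he0 hrel hf j hj fun k _ => by simp [hA]
  rcases le_or_gt (a m + tropEsymm a m j) (tropEsymm a m (j + 1)) with hQ | hP
  · exact tropEsymm_le_of_forall_add_le hA (eq_tropEsymm_self hA hlast (hf m le_rfl)).ge
      hrel hf hj fun k hjk _ => add_tropEsymm_le_succ_of_le hA hQ hjk
  · refine tropEsymm_le_of_forall_le_add he0 hrel hf j hj fun k hk => ?_
    by_contra! hQ
    exact (add_tropEsymm_le_succ_of_le hA hQ.le hk.le).not_gt hP

lemma eq_tropEsymm_of_mem_thadd (he0 : e 0 = 0) (hlast : f (m + 1) = a m + e m)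
    (hrel : ∀ j < m, f (j + 1) ∈ thadd (a m + e j) (e (j + 1)))
    (hf : ∀ j ≤ m, f (j + 1) ∈ tropEsymmSet a (m + 1) (j + 1)) {k : ℕ} (hk : k < m)
    (hu : #(tropEsymmArgmin a m (k + 1)) ≤ 1) : e (k + 1) = tropEsymm a m (k + 1) := by
  have hle {j : ℕ} (hj : j ≤ m) := tropEsymm_le_of_mem_thadd he0 hlast hrel hf hj
  rcases eq_or_ne (tropEsymm a m (k + 1)) ⊤ with htop | hfin
  · have := hle hk
    rw [htop] at this ⊢
    exact top_le_iff.1 this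
  rcases tropEsymm_lt_add_or_add_lt (A := a m) hfin hu with hL | hR
  · have hfk : f (k + 1) = tropEsymm a m (k + 1) := by
      have := eq_of_mem_tropEsymmSet (hf k hk.le)
        ((card_tropEsymmArgmin_succ_le_of_lt_add hL).trans hu)
      rwa [tropEsymm_succ_succ, min_eq_left hL.le] at this
    rw [← hfk]
    exact eq_right_of_mem_thadd (hrel k hk) (hfk ▸ hL.trans_le (add_le_add_right (hle hk.le) _))
  have hA : a m ≠ ⊤ := fun hA => by simp [hA] at hR
  rcases Nat.lt_or_ge (k + 1) m with hk1 | hk1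
  · have hfk : f (k + 2) = a m + tropEsymm a m (k + 1) := by
      have := eq_of_mem_tropEsymmSet (hf (k + 1) hk1.le)
        ((card_tropEsymmArgmin_succ_le_of_add_lt hR).trans hu)
      rwa [tropEsymm_succ_succ, min_eq_right hR.le] at this
    refine WithTop.add_left_cancel hA (hfk ▸ eq_left_of_mem_thadd (hrel (k + 1) hk1) ?_)
    exact hfk ▸ hR.trans_le (hle hk1)
  · obtain rfl : k + 1 = m := by omega
    exact eq_tropEsymm_self hA hlast (hf _ le_rfl)

theorem mem_tropEsymmSet_of_mem_thadd (he0 : e 0 = 0) (hlast : f (m + 1) = a m + e m)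
    (hrel : ∀ j < m, f (j + 1) ∈ thadd (a m + e j) (e (j + 1)))
    (hf : ∀ j ≤ m, f (j + 1) ∈ tropEsymmSet a (m + 1) (j + 1)) {j : ℕ} (hj : j ≤ m) :
    e j ∈ tropEsymmSet a m j := by
  refine ⟨tropEsymm_le_of_mem_thadd he0 hlast hrel hf hj, ?_⟩
  rcases j with _ | k
  · exact Or.inl (by rw [he0, tropEsymm_zero])
  · exact or_iff_not_imp_right.2 fun hu =>
      eq_tropEsymm_of_mem_thadd he0 hlast hrel hf hj (not_lt.1 hu)

end division

theorem tropical_division_lemma_general (n : ℕ) (c d a : ℕ → WithTop ℝ)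
    (hmonic : c n = 0) (hfac : TFactors n c a) (hdiv : TDivRel (a (n - 1)) n c d) :
    TFactors (n - 1) d a := by
  rcases n with _ | m
  · intro j hj hj0
    omega
  obtain ⟨hc0, hrel, hcn⟩ := hdiv
  simp only [Nat.add_sub_cancel] at hrel hcn ⊢
  intro j _ hjm
  rw [thsum_map_powersetCard]
  refine mem_tropEsymmSet_of_mem_thadd (e := fun j => d (m - j)) (f := fun j => c (m + 1 - j))
    (by simp [← hcn, hmonic]) (by simp [hc0]) (fun k hk => ?_) (fun k hk => ?_) hjm
  · show c (m + 1 - (k + 1)) ∈ thadd (a m + d (m - k)) (d (m - (k + 1)))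
    rw [Nat.add_sub_add_right, Nat.sub_add_eq]
    exact hrel (m - k) (by omega) (by omega)
  · rw [← thsum_map_powersetCard]
    exact hfac (k + 1) (by omega) (by omega)

/-- If `p` is a monic polynomial of degree `n ≥ 1` over the tropical hyperfield with
`p ∈ ∏_{e=0}^{n-1} (T + a_e)`, and `q` is a polynomial with `p ∈ (T + a_{n-1})·q`, then
`q ∈ ∏_{e=0}^{n-2} (T + a_e)` (the empty product being interpreted trivially for
`n = 1`). -/
theorem tropical_division_lemma (n : ℕ) (hn : 1 ≤ n) (c d a : ℕ → WithTop ℝ)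
    (hmonic : c n = 0) (hfac : TFactors n c a) (hdiv : TDivRel (a (n - 1)) n c d) :
    TFactors (n - 1) d a :=
  tropical_division_lemma_general n c d a hmonic hfac hdiv
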